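/- Fix n ≥ 3, set γ := 2 − 2/n, let α ∈ (0, γ − 1), and let h(t) := (1 − t²)^{−α} for |t| < 1. Let X := ℝ^{n−1} × (−1, 1) ⊆ ℝⁿ, u(x', x_n) := |x'|^γ h(x_n), and define the Legendre transform v : ℝⁿ → ℝ by v(y) := sup_{x ∈ X} ( ⟨x, y⟩ − u(x) ). Then: (a) v is finite at every y ∈ ℝⁿ and v is convex on ℝⁿ; (b) v is differentiable at every y ≠ 0; (c) the subdifferential of v at the origin is ∂v(0) = {0} × [−1, 1]; (d) for every s > 0, ∇v(0, ±s) = (0, ±1). -/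

import Mathlib

open MeasureTheory Set
open scoped InnerProductSpace ENNReal

/-- `h(t) = (1 − t²)^{−α}`. -/
noncomputable def hPog (α t : ℝ) : ℝ := (1 - t ^ 2) ^ (-α)

/-- The last coordinate `x_n` of `x ∈ ℝⁿ`. -/
def lastCoord (n : ℕ) (hn : 3 ≤ n) (x : EuclideanSpace ℝ (Fin n)) : ℝ :=
  x ⟨n - 1, by omega⟩

/-- The Euclidean norm `|x'|` of the first `n − 1` coordinates of `x ∈ ℝⁿ`. -/
noncomputable def primeNorm (n : ℕ) (x : EuclideanSpace ℝ (Fin n)) : ℝ :=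
  Real.sqrt (∑ i : Fin n, if (i : ℕ) = n - 1 then 0 else x i ^ 2)

/-- The Pogorelov-type function `u(x', x_n) = |x'|^γ h(x_n)` with `γ = 2 − 2/n`. -/
noncomputable def uPog (n : ℕ) (hn : 3 ≤ n) (α : ℝ) (x : EuclideanSpace ℝ (Fin n)) : ℝ :=
  primeNorm n x ^ (2 - 2 / (n : ℝ)) * hPog α (lastCoord n hn x)

/-- The slab `X = ℝ^{n−1} × (−1, 1)`. -/
def XPog (n : ℕ) (hn : 3 ≤ n) : Set (EuclideanSpace ℝ (Fin n)) :=
  {x | lastCoord n hn x ∈ Set.Ioo (-1 : ℝ) 1}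

/-- The Legendre transform `v(y) = sup_{x ∈ X} (⟨x, y⟩ − u(x))`. -/
noncomputable def vPog (n : ℕ) (hn : 3 ≤ n) (α : ℝ) (y : EuclideanSpace ℝ (Fin n)) : ℝ :=
  sSup ((fun x => ⟪x, y⟫_ℝ - uPog n hn α x) '' XPog n hn)

/-- The subdifferential of `v` at `y`:
`∂v(y) = {q : ∀ z, v(z) ≥ v(y) + ⟨q, z − y⟩}`. -/
def subdifferential {n : ℕ} (v : EuclideanSpace ℝ (Fin n) → ℝ)
    (y : EuclideanSpace ℝ (Fin n)) : Set (EuclideanSpace ℝ (Fin n)) :=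
  {q | ∀ z, v y + ⟪q, z - y⟫_ℝ ≤ v z}

/-!
Cutting the slab at `x_n = t` and maximising over `x'` is a one-dimensional Legendre transform
(Young's inequality, attained): with `q = γ/(γ-1)`, `K = γ^{1-q}/q` and `m = α(q-1) ∈ (0, 1]`,
`v(y) = max_{|t| ≤ 1} (t y_n + (1 - t²)^m K|y'|^q)`. So `v` is the support function of the compact
curve `{(t, (1 - t²)^m)}` evaluated at `(y_n, K|y'|^q)`, whence `|y_n| ≤ v(y) ≤ |y_n| + K|y'|^q`.
These bounds give `∂v(0)` and, because `q > 1`, the gradient on the `x_n`-axis. Off the axis the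
second coordinate is positive, `(1 - t²)^m` is strictly concave, so the maximising `t` is unique,
and a support function is differentiable wherever its maximiser is unique.
-/

open Filter Topology Asymptotics

section Young

variable {p q : ℝ}

theorem mul_sub_mul_rpow_le (hpq : p.HolderConjugate q) {r a H : ℝ} (hr : 0 ≤ r) (ha : 0 ≤ a)
    (hH : 0 < H) : r * a - H * r ^ p ≤ (p * H) ^ (1 - q) * a ^ q / q := by
  have hpH : 0 < p * H := mul_pos hpq.pos hH
  have hc : 0 < (p * H) ^ (1 / p) := Real.rpow_pos_of_pos hpH _
  have hyoung := Real.young_inequality_of_nonneg (mul_nonneg hr hc.le) (div_nonneg ha hc.le) hpq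
  have hp : (r * (p * H) ^ (1 / p)) ^ p / p = H * r ^ p := by
    rw [Real.mul_rpow hr hc.le, ← Real.rpow_mul hpH.le, one_div_mul_cancel hpq.ne_zero,
      Real.rpow_one]
    field_simp [hpq.ne_zero]
  have hq : (a / (p * H) ^ (1 / p)) ^ q / q = (p * H) ^ (1 - q) * a ^ q / q := by
    rw [Real.div_rpow ha hc.le, ← Real.rpow_mul hpH.le, one_div_mul_eq_div,
      hpq.symm.div_conj_eq_sub_one, show 1 - q = -(q - 1) by ring, Real.rpow_neg hpH.le]
    ring
  have hra : r * (p * H) ^ (1 / p) * (a / (p * H) ^ (1 / p)) = r * a := by field_simp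
  rw [hra, hp, hq] at hyoung
  linarith

theorem mul_sub_mul_rpow_optimal (hpq : p.HolderConjugate q) {a H : ℝ} (ha : 0 ≤ a)
    (hH : 0 < H) :
    (a / (p * H)) ^ (q - 1) * a - H * ((a / (p * H)) ^ (q - 1)) ^ p
      = (p * H) ^ (1 - q) * a ^ q / q := by
  have hpH : 0 < p * H := mul_pos hpq.pos hH
  have hc : 0 ≤ a / (p * H) := div_nonneg ha hpH.le
  have hq1 : q - 1 + 1 ≠ 0 := by linarith [hpq.symm.pos]
  have hpow : ((a / (p * H)) ^ (q - 1)) ^ p = (a / (p * H)) ^ (q - 1) * (a / (p * H)) := by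
    rw [← Real.rpow_mul hc, ← Real.rpow_add_one' hc hq1]
    congr 1
    linear_combination hpq.mul_eq_add
  have hbase : (a / (p * H)) ^ (q - 1) * a = (p * H) ^ (1 - q) * a ^ q := by
    rw [Real.div_rpow ha hpH.le, show 1 - q = -(q - 1) by ring, Real.rpow_neg hpH.le,
      ← sub_add_cancel q 1, Real.rpow_add_one' ha hq1, add_sub_cancel_right]
    ring
  have hHc : H * (a / (p * H)) = a / p := by field_simp
  calc (a / (p * H)) ^ (q - 1) * a - H * ((a / (p * H)) ^ (q - 1)) ^ p
      = (a / (p * H)) ^ (q - 1) * a * (1 - p⁻¹) := by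
        rw [hpow, mul_left_comm, hHc]; ring
    _ = (p * H) ^ (1 - q) * a ^ q / q := by rw [hpq.one_sub_inv, hbase]; ring

end Young

section SupportFun

variable {F : Type*} [NormedAddCommGroup F] [NormedSpace ℝ F] {C : Set (F →L[ℝ] ℝ)}
  {ℓ₀ : F →L[ℝ] ℝ} {x : F}

noncomputable def supportFun (C : Set (F →L[ℝ] ℝ)) (x : F) : ℝ :=
  sSup ((fun ℓ : F →L[ℝ] ℝ => ℓ x) '' C)

theorem le_supportFun (hC : IsCompact C) {ℓ : F →L[ℝ] ℝ} (hℓ : ℓ ∈ C) (x : F) :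
    ℓ x ≤ supportFun C x :=
  le_csSup (hC.image (continuous_eval_const x)).bddAbove (mem_image_of_mem _ hℓ)

theorem supportFun_le (hC : C.Nonempty) {c : ℝ} (h : ∀ ℓ ∈ C, ℓ x ≤ c) : supportFun C x ≤ c :=
  csSup_le (hC.image _) (forall_mem_image.2 h)

theorem exists_apply_eq_supportFun (hC : IsCompact C) (hne : C.Nonempty) (x : F) :
    ∃ ℓ ∈ C, ℓ x = supportFun C x :=
  (hC.image (continuous_eval_const x)).sSup_mem (hne.image _)

theorem eventually_norm_sub_lt_of_isMaxOn (hC : IsCompact C) (hℓ₀ : ℓ₀ ∈ C)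
    (hmax : ∀ ℓ ∈ C, ℓ ≠ ℓ₀ → ℓ x < ℓ₀ x) {ε : ℝ} (hε : 0 < ε) :
    ∀ᶠ y in 𝓝 x, ∀ ℓ ∈ C, IsMaxOn (fun ℓ : F →L[ℝ] ℝ => ℓ y) C ℓ → ‖ℓ - ℓ₀‖ < ε := by
  set S := C \ Metric.ball ℓ₀ ε
  rcases S.eq_empty_or_nonempty with hS | hS
  · refine Eventually.of_forall fun y ℓ hℓ _ => ?_
    by_contra hfar
    exact (eq_empty_iff_forall_notMem.1 hS) ℓ ⟨hℓ, by simpa [dist_eq_norm] using hfar⟩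
  -- on the compact set `S` away from `ℓ₀`, evaluation at `x` stays below `ℓ₀ x` by a gap
  obtain ⟨ℓ₁, hℓ₁S, hℓ₁⟩ :=
    (hC.diff Metric.isOpen_ball).exists_isMaxOn hS (continuous_eval_const x).continuousOn
  have hgap : 0 < ℓ₀ x - ℓ₁ x := by
    refine sub_pos.2 (hmax ℓ₁ hℓ₁S.1 fun h => hℓ₁S.2 ?_)
    simp [h, hε]
  obtain ⟨R, hR⟩ := hC.isBounded.exists_norm_le
  have hclose : ∀ ℓ ∈ C, ∀ y, |ℓ y - ℓ x| ≤ R * ‖y - x‖ := fun ℓ hℓ y => by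
    rw [← map_sub, ← Real.norm_eq_abs]
    exact (ℓ.le_opNorm _).trans (mul_le_mul_of_nonneg_right (hR ℓ hℓ) (norm_nonneg _))
  have hsmall : ∀ᶠ y in 𝓝 x, 2 * R * ‖y - x‖ < ℓ₀ x - ℓ₁ x := by
    have : Continuous fun y => 2 * R * ‖y - x‖ := by fun_prop
    exact (this.tendsto' x 0 (by simp)).eventually_lt_const hgap
  filter_upwards [hsmall] with y hy ℓ hℓ hℓmax
  by_contra hfar
  have hℓS : ℓ ∈ S := ⟨hℓ, by simpa [dist_eq_norm] using hfar⟩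
  have h₀ := abs_le.1 (hclose ℓ₀ hℓ₀ y)
  have h₁ := abs_le.1 (hclose ℓ hℓ y)
  have h₂ : ℓ x ≤ ℓ₁ x := hℓ₁ hℓS
  linarith [isMaxOn_iff.1 hℓmax ℓ₀ hℓ₀]

theorem hasFDerivAt_supportFun (hC : IsCompact C) (hℓ₀ : ℓ₀ ∈ C)
    (hmax : ∀ ℓ ∈ C, ℓ ≠ ℓ₀ → ℓ x < ℓ₀ x) : HasFDerivAt (supportFun C) ℓ₀ x := by
  have hne : C.Nonempty := ⟨ℓ₀, hℓ₀⟩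
  have hle : ∀ ℓ ∈ C, ℓ x ≤ ℓ₀ x := fun ℓ hℓ => by
    rcases eq_or_ne ℓ ℓ₀ with rfl | h
    · exact le_rfl
    · exact (hmax ℓ hℓ h).le
  have hx : supportFun C x = ℓ₀ x := le_antisymm (supportFun_le hne hle) (le_supportFun hC hℓ₀ x)
  refine .of_isLittleO <| isLittleO_iff.2 fun ε hε => ?_
  filter_upwards [eventually_norm_sub_lt_of_isMaxOn hC hℓ₀ hmax hε] with y hy
  obtain ⟨ℓ, hℓ, hℓy⟩ := exists_apply_eq_supportFun hC hne y
  have hℓmax : IsMaxOn (fun ℓ : F →L[ℝ] ℝ => ℓ y) C ℓ :=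
    isMaxOn_iff.2 fun ℓ' h => hℓy ▸ le_supportFun hC h y
  have hlow : ℓ₀ y ≤ ℓ y := isMaxOn_iff.1 hℓmax ℓ₀ hℓ₀
  -- `ℓ x ≤ ℓ₀ x` bounds the remainder `ℓ y - ℓ₀ y` by `(ℓ - ℓ₀) (y - x)`
  have hup : ℓ y - ℓ₀ y ≤ ‖ℓ - ℓ₀‖ * ‖y - x‖ := by
    have := (ℓ - ℓ₀).le_opNorm (y - x)
    simp only [sub_apply, map_sub, Real.norm_eq_abs] at this
    linarith [hle ℓ hℓ, (le_abs_self _).trans this]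
  rw [hx, ← hℓy, map_sub, Real.norm_eq_abs, abs_le]
  constructor <;> nlinarith [mul_le_mul_of_nonneg_right (hy ℓ hℓ hℓmax).le (norm_nonneg (y - x))]

end SupportFun

section Profile

noncomputable def profileFunctional (m t : ℝ) : ℝ × ℝ →L[ℝ] ℝ :=
  t • ContinuousLinearMap.fst ℝ ℝ ℝ + (1 - t ^ 2) ^ m • ContinuousLinearMap.snd ℝ ℝ ℝ

theorem profileFunctional_apply (m t : ℝ) (w : ℝ × ℝ) :
    profileFunctional m t w = t * w.1 + (1 - t ^ 2) ^ m * w.2 := rfl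

noncomputable def profileSupport (m : ℝ) : ℝ × ℝ → ℝ :=
  supportFun (profileFunctional m '' Icc (-1) 1)

variable {m : ℝ}

theorem one_sub_sq_nonneg_of_mem_Icc {t : ℝ} (ht : t ∈ Icc (-1 : ℝ) 1) : 0 ≤ 1 - t ^ 2 := by
  nlinarith [ht.1, ht.2]

theorem continuous_profileFunctional (hm : 0 ≤ m) : Continuous (profileFunctional m) := by
  have := Real.continuous_rpow_const hm
  unfold profileFunctional
  fun_prop

theorem isCompact_image_profileFunctional (hm : 0 ≤ m) :
    IsCompact (profileFunctional m '' Icc (-1) 1) :=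
  isCompact_Icc.image (continuous_profileFunctional hm)

theorem abs_le_profileSupport (hm : 0 < m) (w : ℝ × ℝ) : |w.1| ≤ profileSupport m w := by
  have hC := isCompact_image_profileFunctional hm.le
  have h₁ := le_supportFun hC (mem_image_of_mem _ (right_mem_Icc.2 (by norm_num))) w
  have h₂ := le_supportFun hC (mem_image_of_mem _ (left_mem_Icc.2 (by norm_num))) w
  simp only [profileFunctional_apply, sub_self, neg_one_sq, Real.zero_rpow hm.ne',
    one_pow] at h₁ h₂
  unfold profileSupport
  exact abs_le.2 ⟨by linarith, by linarith⟩

theorem profileSupport_le (hm : 0 ≤ m) {w : ℝ × ℝ} (hw : 0 ≤ w.2) :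
    profileSupport m w ≤ |w.1| + w.2 := by
  refine supportFun_le ⟨_, mem_image_of_mem _ (left_mem_Icc.2 (by norm_num))⟩ ?_
  rintro _ ⟨t, ht, rfl⟩
  have h₁ : t * w.1 ≤ |w.1| :=
    calc t * w.1 ≤ |t| * |w.1| := by rw [← abs_mul]; exact le_abs_self _
      _ ≤ |w.1| := mul_le_of_le_one_left (abs_nonneg _) (abs_le.2 ht)
  have h₂ : (1 - t ^ 2) ^ m ≤ 1 :=
    Real.rpow_le_one (one_sub_sq_nonneg_of_mem_Icc ht) (by nlinarith) hm
  rw [profileFunctional_apply]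
  nlinarith

theorem strictConcaveOn_one_sub_sq_rpow (hm₀ : 0 < m) (hm₁ : m ≤ 1) :
    StrictConcaveOn ℝ (Icc (-1 : ℝ) 1) fun t => (1 - t ^ 2) ^ m := by
  refine ⟨convex_Icc _ _, fun s hs t ht hst a b ha hb hab => ?_⟩
  have hsq : a • (1 - s ^ 2) + b • (1 - t ^ 2) < 1 - (a • s + b • t) ^ 2 := by
    obtain rfl : b = 1 - a := by linarith
    have : 0 < a * (1 - a) * (s - t) ^ 2 := by
      have := sub_ne_zero.2 hst
      positivity
    simp only [smul_eq_mul]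
    nlinarith
  calc a • (1 - s ^ 2) ^ m + b • (1 - t ^ 2) ^ m
      ≤ (a • (1 - s ^ 2) + b • (1 - t ^ 2)) ^ m :=
        (Real.concaveOn_rpow hm₀.le hm₁).2 (one_sub_sq_nonneg_of_mem_Icc hs)
          (one_sub_sq_nonneg_of_mem_Icc ht) ha.le hb.le hab
    _ < (1 - (a • s + b • t) ^ 2) ^ m := by
        refine Real.rpow_lt_rpow ?_ hsq hm₀
        simp only [smul_eq_mul]
        nlinarith [one_sub_sq_nonneg_of_mem_Icc hs, one_sub_sq_nonneg_of_mem_Icc ht]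

theorem differentiableAt_profileSupport (hm₀ : 0 < m) (hm₁ : m ≤ 1) {w : ℝ × ℝ}
    (hw : 0 < w.2) : DifferentiableAt ℝ (profileSupport m) w := by
  have hconc : StrictConcaveOn ℝ (Icc (-1 : ℝ) 1) fun t => profileFunctional m t w := by
    refine ⟨convex_Icc _ _, fun s hs t ht hst a b ha hb hab => ?_⟩
    have := (strictConcaveOn_one_sub_sq_rpow hm₀ hm₁).2 hs ht hst ha hb hab
    simp only [profileFunctional_apply, smul_eq_mul] at this ⊢
    nlinarith [mul_lt_mul_of_pos_right this hw]
  obtain ⟨t₀, ht₀, hmax⟩ :=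
    isCompact_Icc.exists_isMaxOn (nonempty_Icc.2 (by norm_num : (-1 : ℝ) ≤ 1))
    ((continuous_eval_const w).comp (continuous_profileFunctional hm₀.le)).continuousOn
  refine (hasFDerivAt_supportFun (isCompact_image_profileFunctional hm₀.le)
    (mem_image_of_mem _ ht₀) ?_).differentiableAt
  rintro _ ⟨t, ht, rfl⟩ hne
  refine lt_of_le_of_ne (hmax ht) fun heq => hne ?_
  have : IsMaxOn (fun t => profileFunctional m t w) (Icc (-1) 1) t :=
    fun s hs => (hmax hs).trans_eq heq.symm
  rw [hconc.eq_of_isMaxOn this hmax ht ht₀]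

end Profile

theorem isLittleO_norm_sub_rpow {F : Type*} [NormedAddCommGroup F] {s : ℝ} (hs : 1 < s) (x : F) :
    (fun y => ‖y - x‖ ^ s) =o[𝓝 x] fun y => y - x := by
  refine isLittleO_iff.2 fun ε hε => ?_
  have hlim : Tendsto (fun y => ‖y - x‖ ^ (s - 1)) (𝓝 x) (𝓝 0) := by
    have : Continuous fun y => ‖y - x‖ ^ (s - 1) :=
      (Real.continuous_rpow_const (by linarith)).comp (by fun_prop)
    simpa [Real.zero_rpow (by linarith : s - 1 ≠ 0)] using this.tendsto x
  filter_upwards [hlim.eventually_lt_const hε] with y hy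
  rw [Real.norm_of_nonneg (by positivity), ← sub_add_cancel s 1,
    Real.rpow_add_one' (norm_nonneg _) (by linarith)]
  exact mul_le_mul_of_nonneg_right hy.le (norm_nonneg _)

theorem sign_eq_sign_of_abs_sub_lt {a b : ℝ} (h : |a - b| < |b|) :
    SignType.sign a = SignType.sign b := by
  rcases lt_trichotomy b 0 with hb | rfl | hb
  · rw [abs_of_neg hb] at h
    rw [sign_neg hb, sign_neg (by linarith [(abs_lt.1 h).2])]
  · exact absurd h (by simp)
  · rw [abs_of_pos hb] at h
    rw [sign_pos hb, sign_pos (by linarith [(abs_lt.1 h).1])]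

theorem convexOn_sSup_inner_sub {E : Type*} [NormedAddCommGroup E] [InnerProductSpace ℝ E]
    {S : Set E} (hS : S.Nonempty) {c : E → ℝ}
    (hbdd : ∀ y, BddAbove ((fun x => ⟪x, y⟫_ℝ - c x) '' S)) :
    ConvexOn ℝ univ fun y => sSup ((fun x => ⟪x, y⟫_ℝ - c x) '' S) := by
  refine ⟨convex_univ, fun y₁ _ y₂ _ a b ha hb hab => csSup_le (hS.image _) ?_⟩
  rintro _ ⟨x, hx, rfl⟩
  have h₁ := mul_le_mul_of_nonneg_left (le_csSup (hbdd y₁) (mem_image_of_mem _ hx)) ha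
  have h₂ := mul_le_mul_of_nonneg_left (le_csSup (hbdd y₂) (mem_image_of_mem _ hx)) hb
  simp only [smul_eq_mul, inner_add_right, real_inner_smul_right] at h₁ h₂ ⊢
  linear_combination h₁ + h₂ + c x * hab

section Perp

variable {E : Type*} [NormedAddCommGroup E] [InnerProductSpace ℝ E] {e : E}

noncomputable def perpPart (e : E) : E →L[ℝ] E :=
  ContinuousLinearMap.id ℝ E - (innerSL ℝ e).smulRight e

theorem perpPart_apply (e x : E) : perpPart e x = x - ⟪e, x⟫_ℝ • e := rfl

theorem inner_perpPart (he : ‖e‖ = 1) (x : E) : ⟪e, perpPart e x⟫_ℝ = 0 := by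
  simp [perpPart_apply, inner_sub_right, real_inner_smul_right, he]

theorem perpPart_smul_self (he : ‖e‖ = 1) (s : ℝ) : perpPart e (s • e) = 0 := by
  simp [perpPart_apply, he]

theorem perpPart_perpPart (he : ‖e‖ = 1) (x : E) : perpPart e (perpPart e x) = perpPart e x := by
  conv_lhs => rw [perpPart_apply, inner_perpPart he, zero_smul, sub_zero]

theorem inner_eq_inner_perpPart_add (he : ‖e‖ = 1) (x y : E) :
    ⟪x, y⟫_ℝ = ⟪perpPart e x, perpPart e y⟫_ℝ + ⟪e, x⟫_ℝ * ⟪e, y⟫_ℝ := by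
  simp only [perpPart_apply, inner_sub_left, inner_sub_right, real_inner_smul_left,
    real_inner_smul_right, real_inner_self_eq_norm_sq, he, real_inner_comm e]
  ring

theorem norm_perpPart_le (he : ‖e‖ = 1) (x : E) : ‖perpPart e x‖ ≤ ‖x‖ := by
  have h := inner_eq_inner_perpPart_add he x x
  rw [real_inner_self_eq_norm_sq, real_inner_self_eq_norm_sq] at h
  exact (pow_le_pow_iff_left₀ (norm_nonneg _) (norm_nonneg _) two_ne_zero).1
    (by nlinarith [mul_self_nonneg ⟪e, x⟫_ℝ])

theorem inner_div_norm_smul_self (r : ℝ) (v : E) : ⟪(r / ‖v‖) • v, v⟫_ℝ = r * ‖v‖ := by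
  rcases eq_or_ne v 0 with rfl | hv
  · simp
  · rw [real_inner_smul_left, real_inner_self_eq_norm_sq]
    field_simp

theorem norm_div_norm_smul_self {r : ℝ} (hr : 0 ≤ r) {v : E} (hv : v = 0 → r = 0) :
    ‖(r / ‖v‖) • v‖ = r := by
  rcases eq_or_ne v 0 with rfl | hv'
  · simp [hv rfl]
  · rw [norm_smul, Real.norm_of_nonneg (by positivity),
      div_mul_cancel₀ _ (norm_ne_zero_iff.2 hv')]

end Perp

section Slab

variable {E : Type*} [NormedAddCommGroup E] [InnerProductSpace ℝ E] {e : E} {p q α : ℝ}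

def slab (e : E) : Set E := {x | ⟪e, x⟫_ℝ ∈ Ioo (-1 : ℝ) 1}

noncomputable def slabPot (e : E) (p α : ℝ) (x : E) : ℝ :=
  ‖perpPart e x‖ ^ p * hPog α ⟪e, x⟫_ℝ

noncomputable def slabLegendre (e : E) (p α : ℝ) (y : E) : ℝ :=
  sSup ((fun x => ⟪x, y⟫_ℝ - slabPot e p α x) '' slab e)

noncomputable def slabCoords (e : E) (p q : ℝ) (y : E) : ℝ × ℝ :=
  (⟪e, y⟫_ℝ, p ^ (1 - q) / q * ‖perpPart e y‖ ^ q)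

theorem hPog_pos {t : ℝ} (ht : t ∈ Ioo (-1 : ℝ) 1) : 0 < hPog α t :=
  Real.rpow_pos_of_pos (by nlinarith [ht.1, ht.2]) _

theorem mul_hPog_rpow (hp : 0 < p) {t : ℝ} (ht : t ∈ Ioo (-1 : ℝ) 1) :
    (p * hPog α t) ^ (1 - q) = p ^ (1 - q) * (1 - t ^ 2) ^ (α * (q - 1)) := by
  have h : 0 < 1 - t ^ 2 := by nlinarith [ht.1, ht.2]
  rw [Real.mul_rpow hp.le (hPog_pos ht).le, hPog, ← Real.rpow_mul h.le]
  ring_nf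

theorem inner_sub_slabPot_le (he : ‖e‖ = 1) (hpq : p.HolderConjugate q) {x : E}
    (hx : x ∈ slab e) (y : E) :
    ⟪x, y⟫_ℝ - slabPot e p α x
      ≤ profileFunctional (α * (q - 1)) ⟪e, x⟫_ℝ (slabCoords e p q y) := by
  have hyoung := mul_sub_mul_rpow_le hpq (norm_nonneg (perpPart e x))
    (norm_nonneg (perpPart e y)) (hPog_pos (α := α) hx)
  rw [mul_hPog_rpow hpq.pos hx] at hyoung
  rw [inner_eq_inner_perpPart_add he, slabPot, profileFunctional_apply, slabCoords]
  dsimp only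
  linear_combination real_inner_le_norm (perpPart e x) (perpPart e y) + hyoung

theorem exists_inner_sub_slabPot_eq (he : ‖e‖ = 1) (hpq : p.HolderConjugate q) {t : ℝ}
    (ht : t ∈ Ioo (-1 : ℝ) 1) (y : E) :
    ∃ x ∈ slab e, ⟪x, y⟫_ℝ - slabPot e p α x
      = profileFunctional (α * (q - 1)) t (slabCoords e p q y) := by
  set v := perpPart e y
  set H := hPog α t
  set r := (‖v‖ / (p * H)) ^ (q - 1)
  have hH : 0 < H := hPog_pos ht
  have hr : 0 ≤ r := Real.rpow_nonneg (div_nonneg (norm_nonneg _) (mul_pos hpq.pos hH).le) _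
  have hrv : v = 0 → r = 0 := fun hv => by
    simp [r, hv, Real.zero_rpow hpq.symm.sub_one_pos.ne']
  -- the optimal radius `r` of the one-dimensional problem, taken in the direction of `v`
  set x := t • e + (r / ‖v‖) • v
  have hxe : ⟪e, x⟫_ℝ = t := by
    simp [x, v, inner_add_right, real_inner_smul_right, inner_perpPart he, he]
  have hxperp : perpPart e x = (r / ‖v‖) • v := by
    simp [x, v, perpPart_smul_self he, perpPart_perpPart he]
  refine ⟨x, by simpa [slab, hxe] using ht, ?_⟩
  have hopt : r * ‖v‖ - H * r ^ p
      = p ^ (1 - q) * (1 - t ^ 2) ^ (α * (q - 1)) * ‖v‖ ^ q / q := by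
    rw [← mul_hPog_rpow hpq.pos ht]
    exact mul_sub_mul_rpow_optimal hpq (norm_nonneg _) hH
  rw [inner_eq_inner_perpPart_add he, slabPot, profileFunctional_apply, slabCoords, hxperp,
    inner_div_norm_smul_self, norm_div_norm_smul_self hr hrv, hxe]
  linear_combination hopt

theorem zero_mem_slab : (0 : E) ∈ slab e := by simp [slab]

theorem isLUB_slabLegendre (he : ‖e‖ = 1) (hpq : p.HolderConjugate q) (hα : 0 ≤ α) (y : E) :
    IsLUB ((fun x => ⟪x, y⟫_ℝ - slabPot e p α x) '' slab e)
      (profileSupport (α * (q - 1)) (slabCoords e p q y)) := by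
  have hm : 0 ≤ α * (q - 1) := mul_nonneg hα hpq.symm.sub_one_pos.le
  have hC := isCompact_image_profileFunctional hm
  refine ⟨?_, fun b hb => ?_⟩
  · rintro _ ⟨x, hx, rfl⟩
    exact (inner_sub_slabPot_le he hpq hx y).trans
      (le_supportFun hC (mem_image_of_mem _ (Ioo_subset_Icc_self hx)) _)
  refine supportFun_le ⟨_, mem_image_of_mem _ (left_mem_Icc.2 (by norm_num : (-1 : ℝ) ≤ 1))⟩ ?_
  rintro _ ⟨t, ht, rfl⟩
  have hIoo : Ioo (-1 : ℝ) 1 ⊆ {t | profileFunctional (α * (q - 1)) t (slabCoords e p q y) ≤ b} :=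
    fun t ht => by
      obtain ⟨x, hx, hxt⟩ := exists_inner_sub_slabPot_eq (α := α) he hpq ht y
      show _ ≤ b
      rw [← hxt]
      exact hb ⟨x, hx, rfl⟩
  have hclosed : IsClosed {t | profileFunctional (α * (q - 1)) t (slabCoords e p q y) ≤ b} :=
    isClosed_le ((continuous_eval_const _).comp (continuous_profileFunctional hm)) continuous_const
  -- the values at `t = ±1` are not attained, but are limits of attained values
  rw [← closure_Ioo (by norm_num : (-1 : ℝ) ≠ 1)] at ht
  exact closure_minimal hIoo hclosed ht

theorem slabLegendre_eq_profileSupport (he : ‖e‖ = 1) (hpq : p.HolderConjugate q) (hα : 0 ≤ α)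
    (y : E) :
    slabLegendre e p α y = profileSupport (α * (q - 1)) (slabCoords e p q y) :=
  (isLUB_slabLegendre he hpq hα y).csSup_eq ⟨_, mem_image_of_mem _ zero_mem_slab⟩

theorem convexOn_slabLegendre (he : ‖e‖ = 1) (hpq : p.HolderConjugate q) (hα : 0 ≤ α) :
    ConvexOn ℝ univ (slabLegendre e p α) :=
  convexOn_sSup_inner_sub ⟨0, zero_mem_slab⟩ fun y => (isLUB_slabLegendre he hpq hα y).bddAbove

theorem abs_inner_le_slabLegendre (he : ‖e‖ = 1) (hpq : p.HolderConjugate q) (hα : 0 < α)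
    (y : E) : |⟪e, y⟫_ℝ| ≤ slabLegendre e p α y := by
  rw [slabLegendre_eq_profileSupport he hpq hα.le]
  exact abs_le_profileSupport (mul_pos hα hpq.symm.sub_one_pos) (slabCoords e p q y)

theorem slabLegendre_le (he : ‖e‖ = 1) (hpq : p.HolderConjugate q) (hα : 0 ≤ α) (y : E) :
    slabLegendre e p α y ≤ |⟪e, y⟫_ℝ| + p ^ (1 - q) / q * ‖perpPart e y‖ ^ q := by
  rw [slabLegendre_eq_profileSupport he hpq hα]
  exact profileSupport_le (mul_nonneg hα hpq.symm.sub_one_pos.le) <|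
    mul_nonneg (div_nonneg (Real.rpow_nonneg hpq.pos.le _) hpq.symm.pos.le)
      (Real.rpow_nonneg (norm_nonneg _) _)

theorem slabLegendre_smul_self (he : ‖e‖ = 1) (hpq : p.HolderConjugate q) (hα : 0 < α) (b : ℝ) :
    slabLegendre e p α (b • e) = |b| := by
  have hb : ⟪e, b • e⟫_ℝ = b := by simp [real_inner_smul_right, he]
  refine le_antisymm ?_ (by simpa [hb] using abs_inner_le_slabLegendre he hpq hα (b • e))
  simpa [hb, perpPart_smul_self he, Real.zero_rpow hpq.symm.ne_zero] using
    slabLegendre_le he hpq hα.le (b • e)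

theorem perpPart_eq_zero_of_forall_inner_le (he : ‖e‖ = 1) (hpq : p.HolderConjugate q)
    (hα : 0 ≤ α) {ξ : E} (hξ : ∀ z, ⟪ξ, z⟫_ℝ ≤ slabLegendre e p α z) : perpPart e ξ = 0 := by
  set N := ‖perpPart e ξ‖
  have hq := hpq.symm.sub_one_pos
  have hscale : ∀ r > 0, N ^ 2 ≤ p ^ (1 - q) / q * N ^ q * r ^ (q - 1) := fun r hr => by
    have hinner : ⟪ξ, r • perpPart e ξ⟫_ℝ = r * N ^ 2 := by
      rw [inner_eq_inner_perpPart_add he, map_smul, perpPart_perpPart he, inner_smul_right,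
        real_inner_self_eq_norm_sq, real_inner_smul_right, inner_perpPart he]
      ring
    have hle := (hξ (r • perpPart e ξ)).trans (slabLegendre_le he hpq hα _)
    rw [hinner, real_inner_smul_right, inner_perpPart he, mul_zero, abs_zero, zero_add, map_smul,
      perpPart_perpPart he, norm_smul, Real.norm_of_nonneg hr.le,
      Real.mul_rpow hr.le (norm_nonneg _),
      ← sub_add_cancel q 1, Real.rpow_add_one' hr.le (by linarith), sub_add_cancel] at hle
    nlinarith
  have hlim : Tendsto (fun r => p ^ (1 - q) / q * N ^ q * r ^ (q - 1)) (𝓝[>] 0) (𝓝 0) := by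
    have := ((Real.continuous_rpow_const hq.le).tendsto 0).const_mul (p ^ (1 - q) / q * N ^ q)
    simpa [Real.zero_rpow hq.ne'] using this.mono_left nhdsWithin_le_nhds
  have hN : N ^ 2 ≤ 0 := ge_of_tendsto hlim (eventually_nhdsWithin_of_forall hscale)
  exact norm_eq_zero.1 (pow_eq_zero_iff two_ne_zero |>.1 (le_antisymm hN (sq_nonneg N)))

theorem forall_inner_le_slabLegendre_iff (he : ‖e‖ = 1) (hpq : p.HolderConjugate q)
    (hα : 0 < α) {ξ : E} :
    (∀ z, ⟪ξ, z⟫_ℝ ≤ slabLegendre e p α z) ↔ ∃ s ∈ Icc (-1 : ℝ) 1, s • e = ξ := by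
  constructor
  · intro hξ
    have h₁ := (hξ e).trans_eq (by simpa using slabLegendre_smul_self he hpq hα 1)
    have h₂ := (hξ (-e)).trans_eq (by simpa using slabLegendre_smul_self he hpq hα (-1))
    rw [real_inner_comm] at h₁
    rw [inner_neg_right, real_inner_comm] at h₂
    refine ⟨⟪e, ξ⟫_ℝ, ⟨by linarith, h₁⟩, ?_⟩
    have := perpPart_eq_zero_of_forall_inner_le he hpq hα.le hξ
    rw [perpPart_apply, sub_eq_zero] at this
    exact this.symm
  · rintro ⟨s, hs, rfl⟩ z
    rw [real_inner_smul_left]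
    calc s * ⟪e, z⟫_ℝ ≤ |s| * |⟪e, z⟫_ℝ| := by rw [← abs_mul]; exact le_abs_self _
      _ ≤ |⟪e, z⟫_ℝ| := mul_le_of_le_one_left (abs_nonneg _) (abs_le.2 hs)
      _ ≤ slabLegendre e p α z := abs_inner_le_slabLegendre he hpq hα z

theorem hasFDerivAt_slabLegendre_smul (he : ‖e‖ = 1) (hpq : p.HolderConjugate q) (hα : 0 < α)
    {b : ℝ} (hb : b ≠ 0) :
    HasFDerivAt (slabLegendre e p α) (innerSL ℝ ((SignType.sign b : ℝ) • e)) (b • e) := by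
  -- near `b • e` the remainder is `v z - |⟪e, z⟫|`, between `0` and a multiple of `‖z - b • e‖ ^ q`
  refine .of_isLittleO <| IsBigO.trans_isLittleO (IsBigO.of_bound (p ^ (1 - q) / q) ?_)
    (isLittleO_norm_sub_rpow hpq.symm.lt (b • e))
  filter_upwards [Metric.ball_mem_nhds (b • e) (abs_pos.2 hb)] with z hz
  rw [Metric.mem_ball, dist_eq_norm] at hz
  have hclose : |⟪e, z⟫_ℝ - b| < |b| :=
    calc |⟪e, z⟫_ℝ - b| = |⟪e, z - b • e⟫_ℝ| := by
          simp [inner_sub_right, real_inner_smul_right, he]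
      _ ≤ ‖z - b • e‖ := by simpa [he] using abs_real_inner_le_norm e (z - b • e)
      _ < |b| := hz
  have hrem : slabLegendre e p α z - slabLegendre e p α (b • e)
      - innerSL ℝ ((SignType.sign b : ℝ) • e) (z - b • e) = slabLegendre e p α z - |⟪e, z⟫_ℝ| := by
    rw [slabLegendre_smul_self he hpq hα, innerSL_apply_apply, inner_sub_right,
      real_inner_smul_left, real_inner_smul_left, real_inner_smul_right,
      real_inner_self_eq_norm_sq, he,
      ← sign_eq_sign_of_abs_sub_lt hclose, sign_mul_self, sign_eq_sign_of_abs_sub_lt hclose]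
    linear_combination sign_mul_self b
  have hperp : ‖perpPart e z‖ ≤ ‖z - b • e‖ := by
    simpa [map_sub, perpPart_smul_self he] using norm_perpPart_le he (z - b • e)
  have hK : 0 ≤ p ^ (1 - q) / q := div_nonneg (Real.rpow_nonneg hpq.pos.le _) hpq.symm.pos.le
  rw [hrem, Real.norm_of_nonneg (sub_nonneg.2 (abs_inner_le_slabLegendre he hpq hα z)),
    Real.norm_of_nonneg (by positivity)]
  calc slabLegendre e p α z - |⟪e, z⟫_ℝ| ≤ p ^ (1 - q) / q * ‖perpPart e z‖ ^ q := by
        linarith [slabLegendre_le he hpq hα.le z]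
    _ ≤ p ^ (1 - q) / q * ‖z - b • e‖ ^ q := by
        gcongr
        exact hpq.symm.pos.le

theorem differentiableAt_slabLegendre (he : ‖e‖ = 1) (hpq : p.HolderConjugate q) (hα₀ : 0 < α)
    (hα₁ : α ≤ p - 1) {y : E} (hy : y ≠ 0) : DifferentiableAt ℝ (slabLegendre e p α) y := by
  by_cases hperp : perpPart e y = 0
  · have hyb : y = ⟪e, y⟫_ℝ • e := sub_eq_zero.1 hperp
    have hb : ⟪e, y⟫_ℝ ≠ 0 := fun h => hy (by rw [hyb, h, zero_smul])
    rw [hyb]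
    exact (hasFDerivAt_slabLegendre_smul he hpq hα₀ hb).differentiableAt
  have hm₁ : α * (q - 1) ≤ 1 := by
    have h := mul_le_mul_of_nonneg_right hα₁ hpq.symm.sub_one_pos.le
    linear_combination h + hpq.mul_eq_add
  rw [show slabLegendre e p α = profileSupport (α * (q - 1)) ∘ slabCoords e p q from
    funext (slabLegendre_eq_profileSupport he hpq hα₀.le)]
  refine (differentiableAt_profileSupport (mul_pos hα₀ hpq.symm.sub_one_pos) hm₁ ?_).comp y ?_
  · exact mul_pos (div_pos (Real.rpow_pos_of_pos hpq.pos _) hpq.symm.pos)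
      (Real.rpow_pos_of_pos (norm_pos_iff.2 hperp) _)
  · exact (innerSL ℝ e).differentiableAt.prodMk
      (((differentiable_norm_rpow hpq.symm.lt).comp (perpPart e).differentiable).const_mul _ y)

end Slab

theorem one_lt_two_sub_two_div {n : ℕ} (hn : 2 < n) : 1 < 2 - 2 / (n : ℝ) := by
  have : (2 : ℝ) < n := by exact_mod_cast hn
  have : 2 / (n : ℝ) < 1 := by rw [div_lt_one (by linarith)]; linarith
  linarith

section Coordinates

theorem exists_smul_single_eq_iff {ι : Type*} [Fintype ι] [DecidableEq ι] (j : ι) (A : Set ℝ)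
    (ξ : EuclideanSpace ℝ ι) :
    (∃ s ∈ A, s • EuclideanSpace.single j (1 : ℝ) = ξ) ↔ (∀ i ≠ j, ξ i = 0) ∧ ξ j ∈ A := by
  constructor
  · rintro ⟨s, hs, rfl⟩
    exact ⟨fun i hi => by simp [hi], by simpa using hs⟩
  · rintro ⟨hξ, hA⟩
    refine ⟨ξ j, hA, ?_⟩
    ext i
    by_cases hi : i = j
    · simp [hi]
    · simp [hi, hξ i hi]

variable {n : ℕ} (hn : 3 ≤ n)

theorem lastCoord_eq_inner (x : EuclideanSpace ℝ (Fin n)) :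
    lastCoord n hn x = ⟪EuclideanSpace.single ⟨n - 1, by omega⟩ (1 : ℝ), x⟫_ℝ := by
  simp [lastCoord, EuclideanSpace.inner_single_left]

theorem primeNorm_eq_norm_perpPart (x : EuclideanSpace ℝ (Fin n)) :
    primeNorm n x = ‖perpPart (EuclideanSpace.single ⟨n - 1, by omega⟩ (1 : ℝ)) x‖ := by
  rw [primeNorm, EuclideanSpace.norm_eq]
  congr 1
  refine Finset.sum_congr rfl fun i _ => ?_
  by_cases hi : (i : ℕ) = n - 1
  · rw [show i = ⟨n - 1, by clear hi; omega⟩ from Fin.ext hi]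
    simp [perpPart_apply, EuclideanSpace.inner_single_left]
  · simp [hi, perpPart_apply, EuclideanSpace.inner_single_left, Fin.ext_iff]

theorem uPog_eq_slabPot (α : ℝ) :
    uPog n hn α
      = slabPot (EuclideanSpace.single ⟨n - 1, by omega⟩ (1 : ℝ)) (2 - 2 / (n : ℝ)) α := by
  ext x
  rw [uPog, slabPot, primeNorm_eq_norm_perpPart hn, lastCoord_eq_inner hn]

theorem XPog_eq_slab : XPog n hn = slab (EuclideanSpace.single ⟨n - 1, by omega⟩ (1 : ℝ)) := by
  ext x
  simp [XPog, slab, lastCoord_eq_inner hn]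

theorem vPog_eq_slabLegendre (α : ℝ) :
    vPog n hn α
      = slabLegendre (EuclideanSpace.single ⟨n - 1, by omega⟩ (1 : ℝ)) (2 - 2 / (n : ℝ)) α := by
  ext y
  rw [vPog, slabLegendre, uPog_eq_slabPot hn, XPog_eq_slab hn]

end Coordinates

/-- **Final Remark of the paper: the Legendre transform of the Appendix counterexample.**
For `n ≥ 3`, `γ = 2 − 2/n`, `0 < α < γ − 1` and `u(x', x_n) = |x'|^γ (1 − x_n²)^{−α}` on
`X = ℝ^{n−1} × (−1, 1)`, the Legendre transform `v(y) = sup_{x ∈ X}(⟨x, y⟩ − u(x))`: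
(a) is finite everywhere and convex on `ℝⁿ`; (b) is differentiable at every `y ≠ 0`;
(c) has `∂v(0) = {0} × [−1, 1]`; (d) satisfies `∇v(0, ±s) = (0, ±1)` for every `s > 0`. -/
theorem pogorelov_legendre_transform
    (n : ℕ) (hn : 3 ≤ n) (α : ℝ) (hα0 : 0 < α) (hα1 : α < (2 - 2 / (n : ℝ)) - 1) :
    ((∀ y : EuclideanSpace ℝ (Fin n),
        BddAbove ((fun x => ⟪x, y⟫_ℝ - uPog n hn α x) '' XPog n hn)) ∧
      ConvexOn ℝ Set.univ (vPog n hn α)) ∧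
    (∀ y : EuclideanSpace ℝ (Fin n), y ≠ 0 → DifferentiableAt ℝ (vPog n hn α) y) ∧
    subdifferential (vPog n hn α) 0
      = {q : EuclideanSpace ℝ (Fin n) |
          (∀ i : Fin n, (i : ℕ) ≠ n - 1 → q i = 0) ∧
          lastCoord n hn q ∈ Set.Icc (-1 : ℝ) 1} ∧
    (∀ s : ℝ, 0 < s →
      HasGradientAt (vPog n hn α)
        (EuclideanSpace.single (⟨n - 1, by omega⟩ : Fin n) (1 : ℝ))
        (s • EuclideanSpace.single (⟨n - 1, by omega⟩ : Fin n) (1 : ℝ)) ∧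
      HasGradientAt (vPog n hn α)
        (-EuclideanSpace.single (⟨n - 1, by omega⟩ : Fin n) (1 : ℝ))
        (-(s • EuclideanSpace.single (⟨n - 1, by omega⟩ : Fin n) (1 : ℝ)))) := by
  rw [vPog_eq_slabLegendre hn, uPog_eq_slabPot hn, XPog_eq_slab hn]
  set e : EuclideanSpace ℝ (Fin n) := EuclideanSpace.single ⟨n - 1, by omega⟩ 1
  have he : ‖e‖ = 1 := by simp [e]
  have hpq := Real.HolderConjugate.conjExponent (one_lt_two_sub_two_div hn)
  refine ⟨⟨fun y => (isLUB_slabLegendre he hpq hα0.le y).bddAbove,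
    convexOn_slabLegendre he hpq hα0.le⟩,
    fun y hy => differentiableAt_slabLegendre he hpq hα0 hα1.le hy, ?_, fun s hs => ⟨?_, ?_⟩⟩
  · have h0 : slabLegendre e (2 - 2 / (n : ℝ)) α 0 = 0 := by
      simpa using slabLegendre_smul_self he hpq hα0 0
    ext ξ
    simp only [subdifferential, h0, sub_zero, zero_add]
    rw [mem_ofPred_eq, forall_inner_le_slabLegendre_iff he hpq hα0, exists_smul_single_eq_iff]
    simp [Fin.ext_iff, lastCoord]
  · have h := hasFDerivAt_slabLegendre_smul he hpq hα0 hs.ne'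
    rw [sign_pos hs, SignType.coe_one, one_smul] at h
    exact hasGradientAt_iff_hasFDerivAt.2 h
  · have h := hasFDerivAt_slabLegendre_smul he hpq hα0 (neg_ne_zero.2 hs.ne')
    rw [sign_neg (neg_neg_of_pos hs), SignType.coe_neg_one, neg_one_smul, neg_smul] at h
    exact hasGradientAt_iff_hasFDerivAt.2 h
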